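/- There exist Borel probability measures p and q on ℝ² such that supp(p) ≠ supp(q), yet for every θ ∈ ℝ² with ‖θ‖ = 1, the pushforward measures of p and q under the linear projection x ↦ ⟨θ, x⟩ have equal topological supports: supp((⟨θ, ·⟩)♯p) = supp((⟨θ, ·⟩)♯q). -/

import Mathlib

open MeasureTheory Metric Set
open scoped ENNReal

noncomputable section

/-- The topological support of a Borel measure: the smallest closed set of full measure,
realized as the intersection of all closed sets whose complement is null. -/
def msupport {X : Type*} [TopologicalSpace X] [MeasurableSpace X] (μ : Measure X) : Set X :=
  ⋂₀ {S : Set X | IsClosed S ∧ μ Sᶜ = 0}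

/-- The symmetric support difference (SSD) divergence
`D_△(p, q) = ∫ d(x, supp q) dp + ∫ d(x, supp p) dq` (valued in `ℝ≥0∞`). -/
def Dtri {X : Type*} [MeasurableSpace X] [PseudoMetricSpace X] (p q : Measure X) : ℝ≥0∞ :=
  (∫⁻ x, ENNReal.ofReal (infDist x (msupport q)) ∂p) +
  (∫⁻ x, ENNReal.ofReal (infDist x (msupport p)) ∂q)

/-- The Wasserstein-1 distance: infimum of `∫ d(x, y) dγ` over couplings of `p` and `q`. -/
def DW {X : Type*} [MeasurableSpace X] [PseudoMetricSpace X] (p q : Measure X) : ℝ≥0∞ :=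
  ⨅ γ ∈ {γ : Measure (X × X) | γ.map Prod.fst = p ∧ γ.map Prod.snd = q},
    ∫⁻ z, ENNReal.ofReal (dist z.1 z.2) ∂γ

/-- The β-admissible Wasserstein distance: infimum of `∫ d(x, y) dγ` over measures `γ`
whose first marginal is `p` and whose second marginal is `≤ (1 + β) • q`. -/
def DWbeta {X : Type*} [MeasurableSpace X] [PseudoMetricSpace X]
    (β : ℝ) (p q : Measure X) : ℝ≥0∞ :=
  ⨅ γ ∈ {γ : Measure (X × X) |
      γ.map Prod.fst = p ∧ γ.map Prod.snd ≤ (ENNReal.ofReal (1 + β)) • q},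
    ∫⁻ z, ENNReal.ofReal (dist z.1 z.2) ∂γ

/-- The symmetrized (β₁, β₂)-admissible Wasserstein distance. -/
def DWsym {X : Type*} [MeasurableSpace X] [PseudoMetricSpace X]
    (β₁ β₂ : ℝ) (p q : Measure X) : ℝ≥0∞ :=
  DWbeta β₁ p q + DWbeta β₂ q p

open scoped RealInnerProductSpace

/-!
Take `p` supported on the unit circle and `q` on the closed unit disc. For a unit vector `θ`,
`⟪θ, ·⟫` maps the disc onto `[-1, 1]` by Cauchy–Schwarz, and it maps the circle onto the
same interval because the circle is connected and contains `±θ`. The support of a pushforward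
along a continuous map is the closure of the image of the support, so all projected supports
are `[-1, 1]`.
-/

lemma msupport_eq_support {X : Type*} [TopologicalSpace X] [MeasurableSpace X]
    (μ : Measure X) : msupport μ = μ.support :=
  Measure.support_eq_sInter.symm

namespace MeasureTheory.Measure

variable {X Y : Type*} [TopologicalSpace X] [MeasurableSpace X]
  [TopologicalSpace Y] [MeasurableSpace Y]

lemma support_map_eq_closure_image [HereditarilyLindelofSpace X] [OpensMeasurableSpace X]
    [BorelSpace Y] (μ : Measure X) {f : X → Y} (hf : Continuous f) :
    (μ.map f).support = closure (f '' μ.support) := by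
  apply Subset.antisymm
  · refine support_subset_of_isClosed isClosed_closure ?_
    rw [mem_ae_iff, map_apply hf.measurable isClosed_closure.measurableSet.compl]
    refine measure_mono_null (fun x hx hxs => hx (subset_closure ⟨x, hxs, rfl⟩))
      (measure_compl_support (μ := μ))
  · refine closure_minimal ?_ isClosed_support
    rintro _ ⟨x, hx, rfl⟩
    refine (mem_support_iff_forall _).2 fun U hU => ?_
    exact ((mem_support_iff_forall x).1 hx _ (hf.continuousAt.preimage_mem_nhds hU)).trans_le
      (le_map_apply hf.aemeasurable U)

end MeasureTheory.Measure

lemma ProbabilityTheory.support_geometricMeasure {p : unitInterval} (hp₀ : p ≠ 0)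
    (hp₁ : p ≠ 1) : (ProbabilityTheory.geometricMeasure p).support = univ := by
  refine eq_univ_of_forall fun n => (Measure.mem_support_iff_forall n).2 fun U hU => ?_
  refine lt_of_lt_of_le ?_ (measure_mono (singleton_subset_iff.2 (mem_of_mem_nhds hU)))
  rw [ProbabilityTheory.geometricMeasure_singleton hp₀]
  exact ENNReal.ofReal_pos.2 (ProbabilityTheory.geometricMeasure_pos hp₀ hp₁ n)

/-- Push a fully supported probability measure on `ℕ` forward along a sequence that is dense
in `s`. -/
theorem exists_isProbabilityMeasure_support_eq {X : Type*} [TopologicalSpace X]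
    [TopologicalSpace.PseudoMetrizableSpace X] [MeasurableSpace X] [BorelSpace X] {s : Set X}
    (hs : TopologicalSpace.IsSeparable s) (hsc : IsClosed s) (hne : s.Nonempty) :
    ∃ μ : Measure X, IsProbabilityMeasure μ ∧ μ.support = s := by
  obtain ⟨t, hts, htc, hst⟩ := hs.exists_countable_dense_subset
  obtain ⟨u, rfl⟩ := htc.exists_eq_range (closure_nonempty_iff.1 (hne.mono hst))
  let p : unitInterval := ⟨1 / 2, by norm_num, by norm_num⟩
  have hp₀ : p ≠ 0 := fun h => by simpa [p] using congrArg Subtype.val h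
  have hp₁ : p ≠ 1 := fun h => by simpa [p] using congrArg Subtype.val h
  refine ⟨(ProbabilityTheory.geometricMeasure p).map u,
    Measure.isProbabilityMeasure_map measurable_from_nat.aemeasurable, ?_⟩
  rw [Measure.support_map_eq_closure_image _ continuous_of_discreteTopology,
    ProbabilityTheory.support_geometricMeasure hp₀ hp₁, image_univ]
  exact (closure_minimal hts hsc).antisymm hst

lemma image_inner_closedBall {E : Type*} [NormedAddCommGroup E] [InnerProductSpace ℝ E]
    {θ : E} (hθ : ‖θ‖ = 1) : (fun x => ⟪θ, x⟫) '' closedBall 0 1 = Icc (-1) 1 := by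
  apply Subset.antisymm
  · rintro _ ⟨x, hx, rfl⟩
    refine abs_le.1 ((abs_real_inner_le_norm θ x).trans ?_)
    rw [hθ, one_mul]
    exact mem_closedBall_zero_iff.1 hx
  · intro t ht
    refine ⟨t • θ, ?_, ?_⟩
    · rw [mem_closedBall_zero_iff, norm_smul, hθ, mul_one]
      exact abs_le.2 ht
    · simp only [real_inner_smul_right, real_inner_self_eq_norm_sq, hθ]
      ring

lemma image_inner_sphere {E : Type*} [NormedAddCommGroup E] [InnerProductSpace ℝ E]
    (hE : 1 < Module.rank ℝ E) {θ : E} (hθ : ‖θ‖ = 1) :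
    (fun x => ⟪θ, x⟫) '' sphere 0 1 = Icc (-1) 1 := by
  apply Subset.antisymm
  · exact (image_mono sphere_subset_closedBall).trans (image_inner_closedBall hθ).subset
  · have := (isPreconnected_sphere hE 0 1).intermediate_value (a := -θ) (b := θ)
      (f := fun x => ⟪θ, x⟫) (by simpa using hθ) (by simpa using hθ) (by fun_prop)
    simpa [hθ] using this

/-- **Proposition 7.** There are probability measures on ℝ² with different
supports whose 1D projections along every unit direction have equal supports. -/
theorem sliced_support_counterexample :
    ∃ p q : Measure (EuclideanSpace ℝ (Fin 2)),
      IsProbabilityMeasure p ∧ IsProbabilityMeasure q ∧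
      msupport p ≠ msupport q ∧
      ∀ θ : EuclideanSpace ℝ (Fin 2), ‖θ‖ = 1 →
        msupport (p.map (fun x => ⟪θ, x⟫)) = msupport (q.map (fun x => ⟪θ, x⟫)) := by
  have hrank : 1 < Module.rank ℝ (EuclideanSpace ℝ (Fin 2)) := by
    rw [← Module.finrank_eq_rank, finrank_euclideanSpace_fin]
    norm_num
  obtain ⟨p, hp, hp_supp⟩ := exists_isProbabilityMeasure_support_eq (.of_separableSpace _)
    (isClosed_sphere (x := (0 : EuclideanSpace ℝ (Fin 2))))
    (NormedSpace.sphere_nonempty.2 zero_le_one)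
  obtain ⟨q, hq, hq_supp⟩ := exists_isProbabilityMeasure_support_eq (.of_separableSpace _)
    (isClosed_closedBall (x := (0 : EuclideanSpace ℝ (Fin 2))))
    (nonempty_closedBall.2 zero_le_one)
  refine ⟨p, q, hp, hq, ?_, fun θ hθ => ?_⟩
  · rw [msupport_eq_support, msupport_eq_support, hp_supp, hq_supp]
    intro h
    have h₀ : (0 : EuclideanSpace ℝ (Fin 2)) ∈ sphere 0 1 :=
      h ▸ mem_closedBall_self zero_le_one
    simp at h₀
  · have hθ_cont : Continuous fun x : EuclideanSpace ℝ (Fin 2) => ⟪θ, x⟫ := by fun_prop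
    simp only [msupport_eq_support, Measure.support_map_eq_closure_image _ hθ_cont, hp_supp,
      hq_supp, image_inner_sphere hrank hθ, image_inner_closedBall hθ]
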